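/- Let G be a finite property graph, let i ≥ 1, let ℓ be an edge label, let A be a nonempty attribute set, and let θ be a positive integer. If |E(A, ℓ)| · d_m^{i−1} < θ, where d_m is the maximum in-degree in G, then every simple path pattern p of length i whose last label equals ℓ and whose last attribute set equals A is infrequent, i.e., |V(p)| < θ. -/

import Mathlib

/-!
Only the labels and the last attribute set of a pattern matter for the bound. A source of a
path of length `n + 1` is the source of an edge into a source of a path of length `n` with the
same last label and last attribute set, and every vertex has at most `d_m` incoming edges, so
each extra step multiplies the count by at most `d_m`; for length one the sources are among
the sources of the edges in `E(A, ℓ)`.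
-/

/-- A property graph: directed edges labeled by `L`, vertices carrying attribute sets over `Att`. -/
structure PropertyGraph (V L Att : Type) where
  E : Set (V × L × V)
  attr : V → Set Att

/-- A simple path pattern of length `n`: `n+1` nonempty attribute sets and `n` edge labels. -/
structure PathPattern (L Att : Type) (n : ℕ) where
  A : Fin (n + 1) → Set Att
  A_nonempty : ∀ i, (A i).Nonempty
  lab : Fin n → L

namespace PropertyGraph

variable {V L Att : Type}

/-- Vertex `s` matches pattern `p` if it is the source of a path matching `p`. -/
def Matches (G : PropertyGraph V L Att) {n : ℕ} (p : PathPattern L Att n) (s : V) : Prop :=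
  ∃ v : Fin (n + 1) → V,
    v 0 = s ∧
    (∀ i : Fin n, (v i.castSucc, p.lab i, v i.succ) ∈ G.E) ∧
    (∀ i : Fin (n + 1), p.A i ⊆ G.attr (v i))

/-- `V(p)`: the set of vertices matching pattern `p`. -/
def Vmatch (G : PropertyGraph V L Att) {n : ℕ} (p : PathPattern L Att n) : Set V :=
  {s | G.Matches p s}

/-- `E(A, ℓ)`: edges with label `l` whose target's attribute set covers `S`. -/
def edgesTo (G : PropertyGraph V L Att) (S : Set Att) (l : L) : Set (V × L × V) :=
  {e ∈ G.E | e.2.1 = l ∧ S ⊆ G.attr e.2.2}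

/-- `V(A, ℓ)`: vertices whose attribute set covers `S` having an outgoing `l`-labeled edge. -/
def srcVerts (G : PropertyGraph V L Att) (S : Set Att) (l : L) : Set V :=
  {v | S ⊆ G.attr v ∧ ∃ w, (v, l, w) ∈ G.E}

/-- In-degree of a vertex `w`. -/
noncomputable def inDeg (G : PropertyGraph V L Att) (w : V) : ℕ :=
  {e ∈ G.E | e.2.2 = w}.ncard

/-- `d_m`: the maximum in-degree over all vertices. -/
noncomputable def maxInDeg (G : PropertyGraph V L Att) [Fintype V] : ℕ :=
  Finset.univ.sup fun w => G.inDeg w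

/-- Vertex `s` matches the reachability path pattern `⟨A₀, l*, A₁⟩`. -/
def ReachMatches (G : PropertyGraph V L Att) (A₀ A₁ : Set Att) (l : L) (s : V) : Prop :=
  ∃ n : ℕ, 1 ≤ n ∧ ∃ v : Fin (n + 1) → V,
    v 0 = s ∧
    (∀ i : Fin n, (v i.castSucc, l, v i.succ) ∈ G.E) ∧
    A₀ ⊆ G.attr s ∧ A₁ ⊆ G.attr (v (Fin.last n))

/-- The set of vertices matching the reachability path pattern `⟨A₀, l*, A₁⟩`. -/
def VreachMatch (G : PropertyGraph V L Att) (A₀ A₁ : Set Att) (l : L) : Set V :=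
  {s | G.ReachMatches A₀ A₁ l s}

end PropertyGraph

namespace PropertyGraph

variable {V L Att : Type} (G : PropertyGraph V L Att)

def pathSources {n : ℕ} (lab : Fin n → L) (S : Set Att) : Set V :=
  {s | ∃ v : Fin (n + 1) → V, v 0 = s ∧
    (∀ k : Fin n, (v k.castSucc, lab k, v k.succ) ∈ G.E) ∧ S ⊆ G.attr (v (Fin.last n))}

lemma Vmatch_subset_pathSources {n : ℕ} (p : PathPattern L Att n) :
    G.Vmatch p ⊆ G.pathSources p.lab (p.A (Fin.last n)) := by
  rintro s ⟨v, hv0, hE, hA⟩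
  exact ⟨v, hv0, hE, hA (Fin.last n)⟩

lemma pathSources_subset_fst_image_edgesTo (lab : Fin 1 → L) (S : Set Att) :
    G.pathSources lab S ⊆ Prod.fst '' G.edgesTo S (lab 0) := by
  rintro s ⟨v, rfl, hE, hA⟩
  exact ⟨(v 0, lab 0, v 1), ⟨hE 0, rfl, hA⟩, rfl⟩

lemma pathSources_subset_fst_image_edges_into {n : ℕ} (lab : Fin (n + 1) → L) (S : Set Att) :
    G.pathSources lab S ⊆ Prod.fst '' {e ∈ G.E | e.2.2 ∈ G.pathSources (Fin.tail lab) S} := by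
  rintro s ⟨v, rfl, hE, hA⟩
  refine ⟨(v 0, lab 0, v 1), ⟨hE 0, Fin.tail v, rfl, fun k => ?_, ?_⟩, rfl⟩
  · simpa only [Fin.tail, ← Fin.succ_castSucc] using hE k.succ
  · rwa [Fin.tail, Fin.succ_last]

lemma inDeg_le_maxInDeg [Fintype V] (w : V) : G.inDeg w ≤ G.maxInDeg :=
  Finset.le_sup (Finset.mem_univ w)

lemma ncard_edges_into_le [Fintype V] (Q : Set V) :
    {e ∈ G.E | e.2.2 ∈ Q}.ncard ≤ Q.ncard * G.maxInDeg := by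
  have hQ := Q.toFinite
  calc {e ∈ G.E | e.2.2 ∈ Q}.ncard
      = (⋃ w ∈ hQ.toFinset, {e ∈ G.E | e.2.2 = w}).ncard := by
        congr 1; ext e; simp
    _ ≤ ∑ w ∈ hQ.toFinset, G.inDeg w := Finset.set_ncard_biUnion_le _ _
    _ ≤ hQ.toFinset.card * G.maxInDeg :=
        Finset.sum_le_card_nsmul _ _ _ fun w _ => G.inDeg_le_maxInDeg w
    _ = Q.ncard * G.maxInDeg := by rw [Set.ncard_eq_toFinset_card Q hQ]

lemma ncard_pathSources_le [Fintype V] (hE : G.E.Finite) {n : ℕ} (lab : Fin (n + 1) → L)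
    (S : Set Att) :
    (G.pathSources lab S).ncard ≤ (G.edgesTo S (lab (Fin.last n))).ncard * G.maxInDeg ^ n := by
  induction n with
  | zero =>
    calc (G.pathSources lab S).ncard
        ≤ (Prod.fst '' G.edgesTo S (lab 0)).ncard :=
          Set.ncard_le_ncard (G.pathSources_subset_fst_image_edgesTo lab S)
      _ ≤ (G.edgesTo S (lab 0)).ncard := Set.ncard_image_le (hE.subset (Set.sep_subset _ _))
      _ = _ := by simp
  | succ n ih =>
    calc (G.pathSources lab S).ncard
        ≤ (Prod.fst '' {e ∈ G.E | e.2.2 ∈ G.pathSources (Fin.tail lab) S}).ncard :=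
          Set.ncard_le_ncard (G.pathSources_subset_fst_image_edges_into lab S)
      _ ≤ {e ∈ G.E | e.2.2 ∈ G.pathSources (Fin.tail lab) S}.ncard :=
          Set.ncard_image_le (hE.subset (Set.sep_subset _ _))
      _ ≤ (G.pathSources (Fin.tail lab) S).ncard * G.maxInDeg := G.ncard_edges_into_le _
      _ ≤ (G.edgesTo S (lab (Fin.last (n + 1)))).ncard * G.maxInDeg ^ n * G.maxInDeg := by
          gcongr
          simpa only [Fin.tail, Fin.succ_last] using ih (Fin.tail lab)
      _ = _ := by rw [mul_assoc, ← pow_succ]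

end PropertyGraph

open PropertyGraph in
/-- If |E(A,ℓ)| · d_m^(i−1) < θ, then every length-i pattern ending with
⟨ℓ, A⟩ is infrequent. -/
theorem prune_by_edgesTo {V L Att : Type} [Fintype V] [Fintype L] (G : PropertyGraph V L Att)
    {i : ℕ} (hi : 1 ≤ i) (l : L) (S : Set Att)
    (θ : ℕ)
    (hprune : (G.edgesTo S l).ncard * G.maxInDeg ^ (i - 1) < θ) :
    ∀ p : PathPattern L Att i,
      p.lab ⟨i - 1, by omega⟩ = l → p.A (Fin.last i) = S →
      (G.Vmatch p).ncard < θ := by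
  intro p hlab hA
  obtain ⟨n, rfl⟩ := Nat.exists_eq_add_of_le' hi
  calc (G.Vmatch p).ncard
      ≤ (G.pathSources p.lab S).ncard := Set.ncard_le_ncard (hA ▸ G.Vmatch_subset_pathSources p)
    _ ≤ (G.edgesTo S l).ncard * G.maxInDeg ^ n :=
        hlab ▸ G.ncard_pathSources_le G.E.toFinite p.lab S
    _ < θ := hprune
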